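/- A pseudo morphism (R, ρ) : D → E in Diag←(X) is a weak equivalence if and only if its mate (R, ρ⁻¹) : E → D in Diag→(X) is a weak equivalence, where weak equivalence in Diag← means inducing a bijection on lifts against every discrete opfibration over X, and weak equivalence in Diag→ means the induced functor Diag→(π) is a discrete opfibration at (R, ρ⁻¹) for every discrete opfibration π. -/
import Mathlib


open CategoryTheory

universe v u

variable {X : Type u} [Category.{v} X]

/-- A functor is a discrete opfibration if every morphism out of the image of an object
has a unique lift with prescribed domain. -/
def IsDiscreteOpfibration {Eb : Type u} [Category.{v} Eb] (π : Eb ⥤ X) : Prop :=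
  ∀ (e : Eb) (y : X) (f : π.obj e ⟶ y),
    ∃! p : Σ e' : Eb, e ⟶ e', ∃ h : π.obj p.1 = y, π.map p.2 ≫ eqToHom h = f

/-- A morphism `(R, ρ) : (J, D) ⟶ (K, E)` in `Diag←(X)` (`R : K ⥤ J`, `ρ : R ⋙ D ⟶ E`)
is a weak equivalence: for every discrete opfibration `π` over `X` the induced function
`R_*` from lifts of `D` to lifts of `E` is a bijection; equivalently, every lift `Ebar`
of `E` along `π` has a unique preimage, i.e. a unique lift `Db` of `D` admitting a
natural transformation `R ⋙ Db ⟶ Ebar` lying over `ρ`. -/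
def ContraWeakEquivalence {J K : Type v} [SmallCategory J] [SmallCategory K]
    (D : J ⥤ X) (E : K ⥤ X) (R : K ⥤ J) (ρ : R ⋙ D ⟶ E) : Prop :=
  ∀ (Eb : Type u) (_ : Category.{v} Eb) (π : Eb ⥤ X), IsDiscreteOpfibration π →
    ∀ (Ebar : K ⥤ Eb) (hEbar : Ebar ⋙ π = E),
      ∃! Db : { F : J ⥤ Eb // F ⋙ π = D },
        ∃ ρb : R ⋙ Db.1 ⟶ Ebar,
          ∀ k : K, π.map (ρb.app k) =
            eqToHom (Functor.congr_obj Db.2 (R.obj k)) ≫ ρ.app k ≫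
              eqToHom (Functor.congr_obj hEbar k).symm

/-- A morphism `(S, σ) : (K, E) ⟶ (J, D)` in `Diag→(X)` (`S : K ⥤ J`, `σ : E ⟶ S ⋙ D`)
is a weak equivalence: for every discrete opfibration `π` over `X`, the induced functor
`Diag→(π)` is a discrete opfibration at `(S, σ)`: every lift `Ebar` of `E` along `π`
extends uniquely to a lift `(S, σb) : (K, Ebar) ⟶ (J, Db)` of the whole morphism. -/
def CovWeakEquivalence {J K : Type v} [SmallCategory J] [SmallCategory K]
    (E : K ⥤ X) (D : J ⥤ X) (S : K ⥤ J) (σ : E ⟶ S ⋙ D) : Prop :=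
  ∀ (Eb : Type u) (_ : Category.{v} Eb) (π : Eb ⥤ X), IsDiscreteOpfibration π →
    ∀ (Ebar : K ⥤ Eb) (hEbar : Ebar ⋙ π = E),
      ∃! p : Σ Db : { F : J ⥤ Eb // F ⋙ π = D }, (Ebar ⟶ S ⋙ Db.1),
        ∀ k : K, π.map (p.2.app k) =
          eqToHom (Functor.congr_obj hEbar k) ≫ σ.app k ≫
            eqToHom (Functor.congr_obj p.1.2 (S.obj k)).symm

theorem IsDiscreteOpfibration.map_injective {Eb : Type u} [Category.{v} Eb] {π : Eb ⥤ X}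
    (hπ : IsDiscreteOpfibration π) {e e' : Eb} {p q : e ⟶ e'}
    (h : π.map p = π.map q) : p = q := by
  obtain ⟨l, -, hu⟩ := hπ e (π.obj e') (π.map q)
  have h1 := hu ⟨e', p⟩ ⟨rfl, by simp [h]⟩
  have h2 := hu ⟨e', q⟩ ⟨rfl, by simp⟩
  simpa using h1.trans h2.symm

theorem IsDiscreteOpfibration.isIso_of_map {Eb : Type u} [Category.{v} Eb] {π : Eb ⥤ X}
    (hπ : IsDiscreteOpfibration π) {e e' : Eb} (p : e ⟶ e') [IsIso (π.map p)] :
    IsIso p := by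
  obtain ⟨⟨e'', q⟩, ⟨hq, hq2⟩, -⟩ := hπ e' (π.obj e) (inv (π.map p))
  obtain ⟨l, -, hu⟩ := hπ e (π.obj e) (𝟙 _)
  have h1 := hu ⟨e'', p ≫ q⟩ ⟨hq, by rw [Functor.map_comp, Category.assoc, hq2]; simp⟩
  have h2 := hu ⟨e, 𝟙 e⟩ ⟨rfl, by simp⟩
  have h12 := h1.trans h2.symm
  obtain ⟨he, hpq⟩ : e'' = e ∧ HEq (p ≫ q) (𝟙 e) := by
    simpa using h12
  subst he
  have hpq' := eq_of_heq hpq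
  have hq' : π.map q = inv (π.map p) := by simpa using hq2
  have hqp : q ≫ p = 𝟙 e' := hπ.map_injective (by simp [hq'])
  exact ⟨q, hpq', hqp⟩

/-- A pseudo morphism `(R, ρ) : D ⟶ E` in `Diag←(X)` is a weak equivalence if and only
if its mate `(R, ρ⁻¹) : E ⟶ D` in `Diag→(X)` is a weak equivalence. -/
theorem contraWeakEquivalence_iff_mate_covWeakEquivalence
    {J K : Type v} [SmallCategory J] [SmallCategory K]
    (D : J ⥤ X) (E : K ⥤ X) (R : K ⥤ J) (ρ : R ⋙ D ⟶ E) [IsIso ρ] :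
    ContraWeakEquivalence D E R ρ ↔ CovWeakEquivalence E D R (inv ρ) := by
  constructor
  · intro hC Eb instEb π hπ Ebar hEbar
    obtain ⟨Db, ⟨ρb, hρb⟩, hDuniq⟩ := hC Eb instEb π hπ Ebar hEbar
    have hiapp : ∀ k, IsIso (ρb.app k) := fun k => by
      have : IsIso (π.map (ρb.app k)) := by rw [hρb k]; infer_instance
      exact hπ.isIso_of_map _
    have hiso : IsIso ρb := NatIso.isIso_of_isIso_app ρb
    refine ⟨⟨Db, inv ρb⟩, fun k => ?_, ?_⟩
    · simp [NatIso.isIso_inv_app, hρb k]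
    · rintro ⟨Db', σb'⟩ hσ'
      have hiapp' : ∀ k, IsIso (σb'.app k) := fun k => by
        have : IsIso (π.map (σb'.app k)) := by rw [hσ' k]; infer_instance
        exact hπ.isIso_of_map _
      have hiso' : IsIso σb' := NatIso.isIso_of_isIso_app σb'
      have hD' : Db' = Db := hDuniq Db'
        ⟨inv σb', fun k => by simp [NatIso.isIso_inv_app, hσ' k]⟩
      subst hD'
      have hss : σb' = inv ρb := by
        apply NatTrans.ext; funext k
        apply hπ.map_injective
        rw [hσ' k]; simp [NatIso.isIso_inv_app, hρb k]
      rw [hss]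
  · intro hV Eb instEb π hπ Ebar hEbar
    obtain ⟨⟨Db, σb⟩, hσ, huniq⟩ := hV Eb instEb π hπ Ebar hEbar
    have hiapp : ∀ k, IsIso (σb.app k) := fun k => by
      have : IsIso (π.map (σb.app k)) := by rw [hσ k]; infer_instance
      exact hπ.isIso_of_map _
    have hiso : IsIso σb := NatIso.isIso_of_isIso_app σb
    refine ⟨Db, ⟨inv σb, fun k => by simp [NatIso.isIso_inv_app, hσ k]⟩, ?_⟩
    rintro Db' ⟨ρb', hρ'⟩
    have hiapp' : ∀ k, IsIso (ρb'.app k) := fun k => by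
      have : IsIso (π.map (ρb'.app k)) := by rw [hρ' k]; infer_instance
      exact hπ.isIso_of_map _
    have hiso' : IsIso ρb' := NatIso.isIso_of_isIso_app ρb'
    have h := huniq ⟨Db', inv ρb'⟩
      (fun k => by simp [NatIso.isIso_inv_app, hρ' k])
    exact congrArg Sigma.fst h
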